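/- With s independent uniformly random permutations, the number of indices i ∈ {1,…,s} with matching min-hash values, C := #{i : min_{π_i}(Q) = min_{π_i}(Q')}, has expectation s·J, where J is the Jaccard coefficient of Q and Q'. -/

import Mathlib

/-!
A match at index `i` happens exactly when the `πᵢ`-minimum of `Q ∪ Q'` lies in `Q ∩ Q'`.
Precomposing `π` with the transposition of two points `x, y ∈ Q ∪ Q'` swaps the events
"the minimum is `x`" and "the minimum is `y`", so under a uniform permutation the minimum of
`Q ∪ Q'` is uniform on `Q ∪ Q'` and a single match has probability `J`. Linearity of
expectation over the `s` independent coordinates gives `s · J`.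
-/

open Finset

noncomputable def minHash {α : Type*} [Fintype α] [LinearOrder α]
    (π : Equiv.Perm α) (Q : Finset α) (hQ : Q.Nonempty) : α :=
  π.symm ((Q.image π).min' (hQ.image π))

section MinHash

variable {α : Type*} [Fintype α] [LinearOrder α] (π : Equiv.Perm α) {U : Finset α}
  (hU : U.Nonempty)

lemma minHash_mem : minHash π U hU ∈ U := by
  obtain ⟨a, ha, hπa⟩ := mem_image.mp (min'_mem (U.image π) (hU.image π))
  rwa [minHash, ← hπa, Equiv.symm_apply_apply]

lemma apply_minHash_le {b : α} (hb : b ∈ U) : π (minHash π U hU) ≤ π b := by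
  rw [minHash, Equiv.apply_symm_apply]
  exact min'_le _ _ (mem_image_of_mem π hb)

lemma minHash_eq_of_forall_le {a : α} (ha : a ∈ U) (hle : ∀ b ∈ U, π a ≤ π b) :
    minHash π U hU = a :=
  π.injective <| (apply_minHash_le π hU ha).antisymm (hle _ (minHash_mem π hU))

lemma minHash_mul_of_forall_mem_iff {σ : Equiv.Perm α} (hσ : ∀ a, σ a ∈ U ↔ a ∈ U) :
    minHash (π * σ) U hU = σ⁻¹ (minHash π U hU) := by
  refine minHash_eq_of_forall_le _ hU ?_ fun b hb => ?_
  · rw [← hσ, Equiv.Perm.coe_inv, Equiv.apply_symm_apply]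
    exact minHash_mem π hU
  · rw [Equiv.Perm.mul_apply, Equiv.Perm.coe_inv, Equiv.apply_symm_apply]
    exact apply_minHash_le π hU ((hσ b).mpr hb)

variable [DecidableEq α]

lemma minHash_mul_swap {x y : α} (hx : x ∈ U) (hy : y ∈ U) :
    minHash (π * Equiv.swap x y) U hU = Equiv.swap x y (minHash π U hU) := by
  refine minHash_mul_of_forall_mem_iff π hU fun a => ?_
  rw [Equiv.swap_apply_def]
  split_ifs with hax hay
  · simp [hax, hy, hx]
  · simp [hay, hy, hx]
  · rfl

lemma minHash_eq_minHash_iff {Q Q' : Finset α} (hQ : Q.Nonempty) (hQ' : Q'.Nonempty) :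
    minHash π Q hQ = minHash π Q' hQ' ↔
      minHash π (Q ∪ Q') (hQ.mono subset_union_left) ∈ Q ∩ Q' := by
  have hU := hQ.mono (subset_union_left (s₂ := Q'))
  constructor
  · intro h
    have hmem' : minHash π Q hQ ∈ Q' := h ▸ minHash_mem π hQ'
    have hunion : minHash π (Q ∪ Q') hU = minHash π Q hQ := by
      refine minHash_eq_of_forall_le π hU (mem_union_left _ (minHash_mem π hQ)) fun b hb => ?_
      rcases mem_union.mp hb with hb | hb
      · exact apply_minHash_le π hQ hb
      · exact h ▸ apply_minHash_le π hQ' hb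
    rw [hunion]
    exact mem_inter.mpr ⟨minHash_mem π hQ, hmem'⟩
  · intro h
    obtain ⟨hmemQ, hmemQ'⟩ := mem_inter.mp h
    rw [minHash_eq_of_forall_le π hQ hmemQ fun b hb => apply_minHash_le π hU (mem_union_left _ hb),
      minHash_eq_of_forall_le π hQ' hmemQ' fun b hb => apply_minHash_le π hU (mem_union_right _ hb)]

lemma card_filter_minHash_eq {x y : α} (hx : x ∈ U) (hy : y ∈ U) :
    #{π : Equiv.Perm α | minHash π U hU = x} = #{π : Equiv.Perm α | minHash π U hU = y} := by
  refine card_nbij' (· * Equiv.swap x y) (· * Equiv.swap x y) ?_ ?_ ?_ ?_ <;>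
    intro π hπ <;> simp_all [minHash_mul_swap _ hU hx hy, mul_assoc]

lemma card_filter_minHash_mem_div {K : Type*} [Field K] [CharZero K] {T : Finset α}
    (hT : T ⊆ U) :
    (#{π : Equiv.Perm α | minHash π U hU ∈ T} : K) / Fintype.card (Equiv.Perm α) = #T / #U := by
  obtain ⟨x₀, hx₀⟩ := id hU
  set k := #{π : Equiv.Perm α | minHash π U hU = x₀}
  have hcard : Fintype.card (Equiv.Perm α) = #U * k := by
    rw [← card_univ, card_eq_sum_card_fiberwise fun π _ => minHash_mem π hU,
      sum_congr rfl fun x hx => card_filter_minHash_eq hU hx hx₀, sum_const, smul_eq_mul]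
  have hcardT : #{π : Equiv.Perm α | minHash π U hU ∈ T} = #T * k := by
    rw [card_eq_sum_card_fiberwise (s := {π | minHash π U hU ∈ T}) (t := T)
        fun π hπ => (mem_filter.mp hπ).2,
      sum_congr rfl fun x hx => ?_, sum_const, smul_eq_mul]
    refine (congrArg card ?_).trans (card_filter_minHash_eq hU (hT hx) hx₀)
    ext π
    simp only [mem_filter, mem_univ, true_and, and_iff_right_iff_imp]
    exact fun h => h ▸ hx
  have hk : (k : K) ≠ 0 := by
    have := Fintype.card_pos (α := Equiv.Perm α)
    rw [hcard] at this
    exact_mod_cast (Nat.pos_of_mul_pos_left this).ne'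
  rw [hcard, hcardT]
  push_cast
  exact mul_div_mul_right _ _ hk

end MinHash

lemma sum_card_filter_apply {ι β : Type*} [Fintype ι] [DecidableEq ι] [Fintype β]
    (p : β → Prop) [DecidablePred p] :
    ∑ π : ι → β, #{i | p (π i)} =
      Fintype.card ι * (Fintype.card β ^ (Fintype.card ι - 1) * #{b | p b}) := by
  calc ∑ π : ι → β, #{i | p (π i)}
      = ∑ i, ∑ π : ι → β, if p (π i) then 1 else 0 := by
        simp only [card_filter]
        exact sum_comm
    _ = ∑ _i : ι, Fintype.card β ^ (Fintype.card ι - 1) * #{b | p b} := by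
        refine sum_congr rfl fun i _ => ?_
        have := Fintype.sum_piFinset_apply (fun b => if p b then 1 else 0) (univ : Finset β) i
        rw [Fintype.piFinset_univ, card_univ, smul_eq_mul] at this
        rw [this, card_filter]
    _ = _ := by rw [sum_const, card_univ, smul_eq_mul]

lemma sum_card_filter_apply_div {ι β K : Type*} [Fintype ι] [DecidableEq ι] [Fintype β]
    [Nonempty β] [Field K] [CharZero K] (p : β → Prop) [DecidablePred p] :
    (∑ π : ι → β, (#{i | p (π i)} : K)) / Fintype.card (ι → β) =
      Fintype.card ι * (#{b | p b} / Fintype.card β) := by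
  rw [← Nat.cast_sum, sum_card_filter_apply, Fintype.card_fun]
  rcases Nat.eq_zero_or_pos (Fintype.card ι) with h | h
  · simp [h]
  have hβ : (Fintype.card β : K) ≠ 0 := by exact_mod_cast Fintype.card_ne_zero
  rw [← Nat.sub_add_cancel h]
  push_cast
  field_simp
  ring

/-- With `s` independent uniformly random permutations, the expected number of indices
`i` with matching min-hash values of `Q` and `Q'` equals `s · J`, where `J` is the
Jaccard coefficient of `Q` and `Q'`. -/
theorem expected_matching_signatures {α : Type*} [Fintype α] [LinearOrder α] [DecidableEq α]
    (s : ℕ) (Q Q' : Finset α) (hQ : Q.Nonempty) (hQ' : Q'.Nonempty) :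
    (∑ π : Fin s → Equiv.Perm α,
        ((Finset.univ.filter (fun i : Fin s =>
            minHash (π i) Q hQ = minHash (π i) Q' hQ')).card : ℚ)) /
      (Fintype.card (Fin s → Equiv.Perm α) : ℚ)
      = (s : ℚ) * (((Q ∩ Q').card : ℚ) / ((Q ∪ Q').card : ℚ)) := by
  rw [sum_card_filter_apply_div (fun σ => minHash σ Q hQ = minHash σ Q' hQ'), Fintype.card_fin]
  simp only [minHash_eq_minHash_iff _ hQ hQ']
  rw [card_filter_minHash_mem_div _ inter_subset_union]
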